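/- Let n be a positive integer, let 0 < p_out < p_in < 1, and let 0 < θ < η with θ + η ≤ 1. Under the SSBM-with-oracle joint distribution, for every symmetric 0-1 adjacency matrix a (with zero diagonal) and every vector s ∈ {−1,0,1}ⁿ such that Pr(A = a, S = s) > 0, the set of maximizers over σ ∈ {−1,1}ⁿ of the posterior probability Pr(σ⁰ = σ | A = a, S = s) is equal to the set of minimizers over σ ∈ {−1,1}ⁿ of cut(C₁^σ, a) − τ·|C₁^σ|·(n − |C₁^σ|) + λ·#{i : s_i ≠ 0 and σ_i ≠ s_i}, where τ := log((1−p_out)/(1−p_in)) / log((p_in(1−p_out))/(p_out(1−p_in))) and λ := log(η/θ) / log((p_in(1−p_out))/(p_out(1−p_in))). -/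

import Mathlib

/-! By Bayes' rule the posterior is the joint mass up to a factor independent of `σ`. Each pair
`i < j` contributes `p_in` or `1 − p_in` when `σ_i = σ_j` and `p_out` or `1 − p_out` otherwise,
and each revealed oracle label contributes `η` or `θ`; factoring out the values at agreement, the
joint mass is `C · exp(−K · objective(σ))`, where `K = log(p_in(1−p_out)/(p_out(1−p_in))) > 0`
and the exponent collects the cut, the number `|C₁|(n − |C₁|)` of pairs across the partition and
the oracle mismatches. Since `exp` is increasing and `K > 0`, maximizing the posterior is
minimizing the objective. -/

open Finset

noncomputable section

/-- Sign value of a Boolean cluster label: `true ↦ 1`, `false ↦ -1`. -/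
def sgnB (b : Bool) : ℤ := if b then 1 else -1

/-- Joint probability mass of the SSBM-with-oracle distribution at the point
`(σ, a, s)`: the ground truth `σ⁰ = σ` (uniform on `{−1,1}ⁿ`, encoded by `Bool`),
the adjacency matrix `A = a` and the oracle vector `S = s`. -/
def jointMass (n : ℕ) (pin pout η θ : ℝ) (σ : Fin n → Bool)
    (a : Fin n → Fin n → ℕ) (s : Fin n → ℤ) : ℝ :=
  (1 / 2) ^ n *
    (∏ p ∈ Finset.univ.filter (fun p : Fin n × Fin n => p.1 < p.2),
      (if a p.1 p.2 = 1 then (if σ p.1 = σ p.2 then pin else pout)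
        else (if σ p.1 = σ p.2 then 1 - pin else 1 - pout))) *
    ∏ j, (if s j = sgnB (σ j) then η else if s j = - sgnB (σ j) then θ else 1 - η - θ)

/-- Posterior probability `Pr(σ⁰ = σ | A = a, S = s)`, as a ratio of probabilities. -/
def posterior (n : ℕ) (pin pout η θ : ℝ) (σ : Fin n → Bool)
    (a : Fin n → Fin n → ℕ) (s : Fin n → ℤ) : ℝ :=
  jointMass n pin pout η θ σ a s / ∑ σ' : Fin n → Bool, jointMass n pin pout η θ σ' a s

/-- `cut(C₁^σ, a) = Σ_{i ∈ C₁^σ, j ∉ C₁^σ} a_{ij}`. -/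
def cutVal (n : ℕ) (σ : Fin n → Bool) (a : Fin n → Fin n → ℕ) : ℝ :=
  ∑ i, ∑ j, (if σ i = true ∧ σ j = false then (a i j : ℝ) else 0)

/-- The MAP objective `cut(C₁^σ, a) − τ|C₁^σ|(n − |C₁^σ|) + λ #{i : s_i ≠ 0, σ_i ≠ s_i}`. -/
def mapObjective (n : ℕ) (τ lam : ℝ) (σ : Fin n → Bool)
    (a : Fin n → Fin n → ℕ) (s : Fin n → ℤ) : ℝ :=
  cutVal n σ a
    - τ * ((Finset.univ.filter (fun i => σ i = true)).card : ℝ)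
        * ((n : ℝ) - ((Finset.univ.filter (fun i => σ i = true)).card : ℝ))
    + lam * ((Finset.univ.filter (fun i => s i ≠ 0 ∧ sgnB (σ i) ≠ s i)).card : ℝ)


open Real

section PairSums

variable {ι M : Type*} [Fintype ι] [LinearOrder ι] [AddCommMonoid M]

lemma sum_sum_eq_sum_lt_add_swap (F : ι → ι → M) (hF : ∀ i, F i i = 0) :
    ∑ i, ∑ j, F i j
      = ∑ p ∈ univ.filter (fun p : ι × ι => p.1 < p.2), (F p.1 p.2 + F p.2 p.1) := by
  have split : ∀ p : ι × ι, F p.1 p.2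
      = (if p.1 < p.2 then F p.1 p.2 else 0) + (if p.2 < p.1 then F p.1 p.2 else 0) := by
    rintro ⟨i, j⟩
    rcases lt_trichotomy i j with h | rfl | h
    · simp [h, h.not_gt]
    · simp [hF]
    · simp [h, h.not_gt]
  have swap : ∑ p : ι × ι, (if p.2 < p.1 then F p.1 p.2 else 0)
      = ∑ p : ι × ι, (if p.1 < p.2 then F p.2 p.1 else 0) :=
    Fintype.sum_equiv (Equiv.prodComm ι ι) _ _ fun _ => rfl
  rw [← Fintype.sum_prod_type', sum_filter, Fintype.sum_congr _ _ split, sum_add_distrib, swap,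
    ← sum_add_distrib]
  exact Fintype.sum_congr _ _ fun p => by split_ifs <;> simp

lemma sum_sum_cross_eq_sum_lt (σ : ι → Bool) (w : ι → ι → M) (hw : ∀ i j, w i j = w j i) :
    ∑ i, ∑ j, (if σ i = true ∧ σ j = false then w i j else 0)
      = ∑ p ∈ univ.filter (fun p : ι × ι => p.1 < p.2),
          (if σ p.1 = σ p.2 then 0 else w p.1 p.2) := by
  rw [sum_sum_eq_sum_lt_add_swap _ fun i => by simp]
  refine sum_congr rfl fun p _ => ?_
  cases σ p.1 <;> cases σ p.2 <;> simp [hw p.1 p.2]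

end PairSums

lemma cutVal_eq_sum_lt {n : ℕ} (σ : Fin n → Bool) (a : Fin n → Fin n → ℕ)
    (hasym : ∀ i j, a i j = a j i) :
    cutVal n σ a
      = ∑ p ∈ univ.filter (fun p : Fin n × Fin n => p.1 < p.2),
          (if σ p.1 = σ p.2 then 0 else (a p.1 p.2 : ℝ)) :=
  sum_sum_cross_eq_sum_lt σ _ fun i j => by rw [hasym]

lemma card_mul_card_compl_eq_sum_lt {n : ℕ} (σ : Fin n → Bool) :
    (#(univ.filter fun i => σ i = true) : ℝ) * (n - #(univ.filter fun i => σ i = true))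
      = ∑ p ∈ univ.filter (fun p : Fin n × Fin n => p.1 < p.2),
          (if σ p.1 = σ p.2 then 0 else (1 : ℝ)) := by
  have hcard := card_filter_add_card_filter_not (s := univ) (p := fun i : Fin n => σ i = true)
  simp only [Bool.not_eq_true, card_univ, Fintype.card_fin] at hcard
  have hcross : ∑ i, ∑ j, (if σ i = true ∧ σ j = false then (1 : ℝ) else 0)
      = #(univ.filter fun i => σ i = true) * #(univ.filter fun i => σ i = false) := by
    rw [← sum_boole, ← sum_boole, sum_mul_sum]
    simp only [ite_zero_mul_ite_zero, mul_one]
  have hcompl : (n : ℝ) - #(univ.filter fun i => σ i = true)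
      = #(univ.filter fun i => σ i = false) := by
    rw [sub_eq_iff_eq_add']; exact_mod_cast hcard.symm
  rw [hcompl, ← hcross, sum_sum_cross_eq_sum_lt σ (fun _ _ => (1 : ℝ)) fun _ _ => rfl]

lemma edge_likelihood_eq_mul_exp {pin pout : ℝ} (hpin : 0 < pin) (hpin1 : pin < 1)
    (hpout : 0 < pout) (hpout1 : pout < 1) {x : ℕ} (hx : x = 0 ∨ x = 1)
    (P : Prop) [Decidable P] :
    (if x = 1 then (if P then pin else pout) else (if P then 1 - pin else 1 - pout))
      = (if x = 1 then pin else 1 - pin)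
        * exp (if P then 0 else
            log ((1 - pout) / (1 - pin)) - log ((pin * (1 - pout)) / (pout * (1 - pin))) * x) := by
  have h1pin : 0 < 1 - pin := by linarith
  have h1pout : 0 < 1 - pout := by linarith
  by_cases hP : P
  · simp [hP]
  rcases hx with rfl | rfl
  · simp only [zero_ne_one, if_false, hP, CharP.cast_eq_zero, mul_zero, sub_zero]
    rw [exp_log (by positivity)]
    field_simp
  · simp only [if_true, hP, if_false, Nat.cast_one, mul_one]
    rw [exp_sub, exp_log (by positivity), exp_log (by positivity)]
    field_simp

lemma oracle_likelihood_eq_mul_exp {η θ : ℝ} (hη : 0 < η) (hθ : 0 < θ) {t : ℤ}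
    (ht : t = -1 ∨ t = 0 ∨ t = 1) (b : Bool) :
    (if t = sgnB b then η else if t = -sgnB b then θ else 1 - η - θ)
      = (if t = 0 then 1 - η - θ else η)
        * exp (if t ≠ 0 ∧ sgnB b ≠ t then -log (η / θ) else 0) := by
  have hexp : exp (-log (η / θ)) = θ / η := by
    rw [exp_neg, exp_log (div_pos hη hθ), inv_div]
  rcases ht with rfl | rfl | rfl <;> cases b <;> simp [sgnB, hexp] <;> field_simp

lemma logOdds_pos {pin pout : ℝ} (hpout : 0 < pout) (hp : pout < pin) (hpin : pin < 1) :
    0 < log ((pin * (1 - pout)) / (pout * (1 - pin))) := by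
  apply log_pos
  rw [one_lt_div (by nlinarith)]
  nlinarith

lemma exists_jointMass_eq_mul_exp_mapObjective {n : ℕ} {pin pout η θ : ℝ}
    (hpout : 0 < pout) (hp : pout < pin) (hpin : pin < 1) (hη : 0 < η) (hθ : 0 < θ)
    {a : Fin n → Fin n → ℕ} (ha01 : ∀ i j, a i j = 0 ∨ a i j = 1)
    (hasym : ∀ i j, a i j = a j i)
    {s : Fin n → ℤ} (hs : ∀ i, s i = -1 ∨ s i = 0 ∨ s i = 1) :
    ∃ C : ℝ, ∀ σ : Fin n → Bool,
      jointMass n pin pout η θ σ a s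
        = C * exp (-(log ((pin * (1 - pout)) / (pout * (1 - pin)))
            * mapObjective n
                (log ((1 - pout) / (1 - pin)) / log ((pin * (1 - pout)) / (pout * (1 - pin))))
                (log (η / θ) / log ((pin * (1 - pout)) / (pout * (1 - pin)))) σ a s)) := by
  set K := log ((pin * (1 - pout)) / (pout * (1 - pin)))
  set T := log ((1 - pout) / (1 - pin))
  set L := log (η / θ)
  have hK : K ≠ 0 := (logOdds_pos hpout hp hpin).ne'
  refine ⟨(1 / 2) ^ n
      * (∏ p ∈ univ.filter (fun p : Fin n × Fin n => p.1 < p.2),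
          (if a p.1 p.2 = 1 then pin else 1 - pin))
      * ∏ j, (if s j = 0 then 1 - η - θ else η), fun σ => ?_⟩
  have hedge : ∑ p ∈ univ.filter (fun p : Fin n × Fin n => p.1 < p.2),
      (if σ p.1 = σ p.2 then 0 else T - K * a p.1 p.2)
      = T * (#(univ.filter fun i => σ i = true) * (n - #(univ.filter fun i => σ i = true)))
        - K * cutVal n σ a := by
    rw [cutVal_eq_sum_lt σ a hasym, card_mul_card_compl_eq_sum_lt, mul_sum, mul_sum,
      ← sum_sub_distrib]
    exact sum_congr rfl fun p _ => by split_ifs <;> ring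
  have horacle : ∑ j, (if s j ≠ 0 ∧ sgnB (σ j) ≠ s j then -L else 0)
      = -L * #(univ.filter fun i => s i ≠ 0 ∧ sgnB (σ i) ≠ s i) := by
    rw [← sum_filter, sum_const, nsmul_eq_mul, mul_comm]
  rw [jointMass,
    prod_congr rfl fun p _ => edge_likelihood_eq_mul_exp (hpout.trans hp) hpin hpout
      (hp.trans hpin) (ha01 p.1 p.2) _,
    prod_congr rfl fun j _ => oracle_likelihood_eq_mul_exp hη hθ (hs j) (σ j),
    prod_mul_distrib, prod_mul_distrib, ← exp_sum, ← exp_sum, hedge, horacle]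
  have hexponent : -(K * mapObjective n (T / K) (L / K) σ a s)
      = (T * (#(univ.filter fun i => σ i = true) * (n - #(univ.filter fun i => σ i = true)))
          - K * cutVal n σ a) + -L * #(univ.filter fun i => s i ≠ 0 ∧ sgnB (σ i) ≠ s i) := by
    rw [mapObjective]
    field_simp
    ring
  rw [hexponent, exp_add]
  ring

theorem map_estimator_noisy_oracle_general
    (n : ℕ) (pin pout η θ : ℝ)
    (hpout : 0 < pout) (hp : pout < pin) (hpin : pin < 1)
    (hθ : 0 < θ) (hθη : θ < η)
    (a : Fin n → Fin n → ℕ)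
    (ha01 : ∀ i j, a i j = 0 ∨ a i j = 1)
    (hasym : ∀ i j, a i j = a j i)
    (s : Fin n → ℤ) (hs : ∀ i, s i = -1 ∨ s i = 0 ∨ s i = 1)
    (hpos : 0 < ∑ σ : Fin n → Bool, jointMass n pin pout η θ σ a s) :
    {σ : Fin n → Bool | ∀ σ' : Fin n → Bool,
        posterior n pin pout η θ σ' a s ≤ posterior n pin pout η θ σ a s}
      =
    {σ : Fin n → Bool | ∀ σ' : Fin n → Bool,
        mapObjective n
            (Real.log ((1 - pout) / (1 - pin)) /
              Real.log ((pin * (1 - pout)) / (pout * (1 - pin))))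
            (Real.log (η / θ) /
              Real.log ((pin * (1 - pout)) / (pout * (1 - pin))))
            σ a s
          ≤ mapObjective n
            (Real.log ((1 - pout) / (1 - pin)) /
              Real.log ((pin * (1 - pout)) / (pout * (1 - pin))))
            (Real.log (η / θ) /
              Real.log ((pin * (1 - pout)) / (pout * (1 - pin))))
            σ' a s} := by
  obtain ⟨C, hC⟩ := exists_jointMass_eq_mul_exp_mapObjective hpout hp hpin (hθ.trans hθη) hθ ha01
    hasym hs
  have hCpos : 0 < C := by
    rw [sum_congr rfl fun σ _ => hC σ, ← mul_sum] at hpos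
    exact pos_of_mul_pos_left hpos (sum_nonneg fun _ _ => (exp_pos _).le)
  ext σ
  refine forall_congr' fun σ' => ?_
  rw [posterior, posterior, div_le_div_iff_of_pos_right hpos, hC, hC,
    mul_le_mul_iff_right₀ hCpos, exp_le_exp, neg_le_neg_iff,
    mul_le_mul_iff_right₀ (logOdds_pos hpout hp hpin)]

/-- **Theorem 1, noisy oracle case.** The maximizers of the posterior
`Pr(σ⁰ = σ | A = a, S = s)` are exactly the minimizers of
`cut(C₁^σ, a) − τ|C₁^σ|(n − |C₁^σ|) + λ #{i : s_i ≠ 0 and σ_i ≠ s_i}`,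
with `τ = log((1−p_out)/(1−p_in)) / log(p_in(1−p_out)/(p_out(1−p_in)))` and
`λ = log(η/θ) / log(p_in(1−p_out)/(p_out(1−p_in)))`. -/
theorem map_estimator_noisy_oracle
    (n : ℕ) (hn : 0 < n) (pin pout η θ : ℝ)
    (hpout : 0 < pout) (hp : pout < pin) (hpin : pin < 1)
    (hθ : 0 < θ) (hθη : θ < η) (hsum : θ + η ≤ 1)
    (a : Fin n → Fin n → ℕ)
    (ha01 : ∀ i j, a i j = 0 ∨ a i j = 1)
    (hasym : ∀ i j, a i j = a j i)
    (hadiag : ∀ i, a i i = 0)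
    (s : Fin n → ℤ) (hs : ∀ i, s i = -1 ∨ s i = 0 ∨ s i = 1)
    (hpos : 0 < ∑ σ : Fin n → Bool, jointMass n pin pout η θ σ a s) :
    {σ : Fin n → Bool | ∀ σ' : Fin n → Bool,
        posterior n pin pout η θ σ' a s ≤ posterior n pin pout η θ σ a s}
      =
    {σ : Fin n → Bool | ∀ σ' : Fin n → Bool,
        mapObjective n
            (Real.log ((1 - pout) / (1 - pin)) /
              Real.log ((pin * (1 - pout)) / (pout * (1 - pin))))
            (Real.log (η / θ) /
              Real.log ((pin * (1 - pout)) / (pout * (1 - pin))))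
            σ a s
          ≤ mapObjective n
            (Real.log ((1 - pout) / (1 - pin)) /
              Real.log ((pin * (1 - pout)) / (pout * (1 - pin))))
            (Real.log (η / θ) /
              Real.log ((pin * (1 - pout)) / (pout * (1 - pin))))
            σ' a s} :=
  map_estimator_noisy_oracle_general n pin pout η θ hpout hp hpin hθ hθη a ha01 hasym s hs hpos

end
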